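/- (ε-ALN robustness for symmetric noise, deterministic core inequality) Let l be a-linear-odd satisfying l(x) - l(-x) = 2ax, let p ∈ [0,1/2), B > 0, and let R : ℝ^d → ℝ be any function of the form R(θ) = (1/m)∑_i l(y_i⟨θ,x_i⟩) with minimizer θ* over {θ : ‖θ‖₂ ≤ B}, and define the noisy risk R̃(θ) = (1-p)R(θ) + p·(1/m)∑_i l(-y_i⟨θ,x_i⟩). Then for all θ with ‖θ‖₂ ≤ B: R̃(θ*) - R̃(θ) ≤ 4|a|Bp‖μ‖₂, where μ = (1/m)∑ y_i x_i. -/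

import Mathlib

open Finset RealInnerProductSpace

/-! Since `l (-z) = l z - 2 a z`, flipping labels with probability `p` perturbs the empirical risk by
the linear functional `θ ↦ -2 a p ⟪θ, μ⟫`. The minimiser `θ*` of `R` can therefore lose at most the
oscillation of that functional over the ball of radius `B`, which Cauchy–Schwarz bounds by
`2 |a| p · 2B ‖μ‖`. -/

lemma flipped_eq_sub_linear {l : ℝ → ℝ} {a : ℝ} (hl : ∀ z, l z - l (-z) = 2 * a * z) (z : ℝ) :
    l (-z) = l z - 2 * a * z := by
  linarith [hl z]

lemma mixture_sum_flipped_eq {ι : Type*} (s : Finset ι) {l : ℝ → ℝ} {a : ℝ}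
    (hl : ∀ z, l z - l (-z) = 2 * a * z) (p c : ℝ) (z : ι → ℝ) :
    (1 - p) * (c * ∑ i ∈ s, l (z i)) + p * (c * ∑ i ∈ s, l (-z i))
      = c * ∑ i ∈ s, l (z i) - 2 * a * p * (c * ∑ i ∈ s, z i) := by
  simp only [flipped_eq_sub_linear hl, sum_sub_distrib, ← mul_sum]
  ring

lemma inner_smul_sum_smul {E ι : Type*} [NormedAddCommGroup E] [InnerProductSpace ℝ E]
    (s : Finset ι) (φ : E) (c : ℝ) (y : ι → ℝ) (x : ι → E) :
    ⟪φ, c • ∑ i ∈ s, y i • x i⟫ = c * ∑ i ∈ s, y i * ⟪φ, x i⟫ := by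
  simp only [real_inner_smul_right, inner_sum]

lemma sub_linear_gap_le_of_le {E : Type*} [NormedAddCommGroup E] [InnerProductSpace ℝ E]
    {R : E → ℝ} {θs θ μ : E} {c B : ℝ} (hmin : R θs ≤ R θ) (hθs : ‖θs‖ ≤ B) (hθ : ‖θ‖ ≤ B) :
    (R θs - c * ⟪θs, μ⟫) - (R θ - c * ⟪θ, μ⟫) ≤ 2 * |c| * B * ‖μ‖ := by
  have hdiam : ‖θ - θs‖ ≤ 2 * B := (norm_sub_le θ θs).trans (by linarith)
  calc (R θs - c * ⟪θs, μ⟫) - (R θ - c * ⟪θ, μ⟫)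
      ≤ c * ⟪θ - θs, μ⟫ := by rw [inner_sub_left]; linarith
    _ ≤ |c| * (‖θ - θs‖ * ‖μ‖) :=
        (le_abs_self _).trans ((abs_mul c _).trans_le
          (mul_le_mul_of_nonneg_left (abs_real_inner_le_norm _ _) (abs_nonneg c)))
    _ ≤ |c| * (2 * B * ‖μ‖) := by gcongr
    _ = 2 * |c| * B * ‖μ‖ := by ring

theorem aln_robustness_core_general {d m : ℕ}
    (l : ℝ → ℝ) (a : ℝ) (hl : ∀ x, l x - l (-x) = 2 * a * x)
    (p B : ℝ) (hp : 0 ≤ p)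
    (x : Fin m → EuclideanSpace ℝ (Fin d)) (y : Fin m → ℝ)
    (R Rt : EuclideanSpace ℝ (Fin d) → ℝ)
    (hR : ∀ θ, R θ = (1 / (m : ℝ)) * ∑ i, l (y i * (inner ℝ θ (x i) : ℝ)))
    (hRt : ∀ θ, Rt θ = (1 - p) * R θ
        + p * ((1 / (m : ℝ)) * ∑ i, l (-(y i * (inner ℝ θ (x i) : ℝ)))))
    (θs : EuclideanSpace ℝ (Fin d)) (hθs : ‖θs‖ ≤ B)
    (hmin : ∀ θ, ‖θ‖ ≤ B → R θs ≤ R θ)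
    (μ : EuclideanSpace ℝ (Fin d))
    (hμ : μ = (m : ℝ)⁻¹ • ∑ i, y i • x i) :
    ∀ θ, ‖θ‖ ≤ B → Rt θs - Rt θ ≤ 4 * |a| * B * p * ‖μ‖ := by
  have hRt_eq : ∀ φ, Rt φ = R φ - 2 * a * p * ⟪φ, μ⟫ := fun φ => by
    rw [hRt, hR, hμ, inner_smul_sum_smul, ← one_div, mixture_sum_flipped_eq _ hl]
  intro θ hθ
  calc Rt θs - Rt θ ≤ 2 * |2 * a * p| * B * ‖μ‖ := by
        rw [hRt_eq, hRt_eq]; exact sub_linear_gap_le_of_le (hmin θ hθ) hθs hθ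
    _ = 4 * |a| * B * p * ‖μ‖ := by rw [abs_mul, abs_mul, abs_two, abs_of_nonneg hp]; ring

theorem aln_robustness_core {d m : ℕ} (hm : 1 ≤ m)
    (l : ℝ → ℝ) (a : ℝ) (hl : ∀ x, l x - l (-x) = 2 * a * x)
    (p B : ℝ) (hp : 0 ≤ p) (hp' : p < 1/2) (hB : 0 < B)
    (x : Fin m → EuclideanSpace ℝ (Fin d)) (y : Fin m → ℝ)
    (hy : ∀ i, y i = 1 ∨ y i = -1)
    (R Rt : EuclideanSpace ℝ (Fin d) → ℝ)
    (hR : ∀ θ, R θ = (1 / (m : ℝ)) * ∑ i, l (y i * (inner ℝ θ (x i) : ℝ)))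
    (hRt : ∀ θ, Rt θ = (1 - p) * R θ
        + p * ((1 / (m : ℝ)) * ∑ i, l (-(y i * (inner ℝ θ (x i) : ℝ)))))
    (θs : EuclideanSpace ℝ (Fin d)) (hθs : ‖θs‖ ≤ B)
    (hmin : ∀ θ, ‖θ‖ ≤ B → R θs ≤ R θ)
    (μ : EuclideanSpace ℝ (Fin d))
    (hμ : μ = (m : ℝ)⁻¹ • ∑ i, y i • x i) :
    ∀ θ, ‖θ‖ ≤ B → Rt θs - Rt θ ≤ 4 * |a| * B * p * ‖μ‖ :=
  aln_robustness_core_general l a hl p B hp x y R Rt hR hRt θs hθs hmin μ hμ
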